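/- For every ε > 0 and every γ > 0 there exists n_0 such that for every n ≥ n_0 there exists a simple graph G on n vertices with independence number α(G) ≤ γ·n for которого the number of 3-edge-colorings of G containing no monochromatic K_3 is at least 2^((1/4 − ε)·n²). -/

import Mathlib

open Finset

/-- `α(G) ≤ b`: every independent set of `G` has size at most `b`. -/
def indepLE {n : ℕ} (G : SimpleGraph (Fin n)) (b : ℝ) : Prop :=
  ∀ S : Finset (Fin n), (∀ u ∈ S, ∀ v ∈ S, u ≠ v → ¬ G.Adj u v) → (S.card : ℝ) ≤ b

/-- `(G, φ)` contains a monochromatic `K_k`. -/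
def HasMonoClique {n r : ℕ} (G : SimpleGraph (Fin n)) (φ : G.edgeSet → Fin r) (k : ℕ) : Prop :=
  ∃ (S : Finset (Fin n)) (c : Fin r), S.card = k ∧
    ∀ u ∈ S, ∀ v ∈ S, u ≠ v → ∃ h : G.Adj u v, φ ⟨s(u, v), h⟩ = c

/-- Number of `r`-edge-colorings of `G` with no monochromatic `K_k`. -/
noncomputable def numColorings {n : ℕ} (G : SimpleGraph (Fin n)) (r k : ℕ) : ℕ :=
  Nat.card {φ : G.edgeSet → Fin r // ¬ HasMonoClique G φ k}

/-- `k_s(G)`: the number of copies of `K_s` in `G`. -/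
noncomputable def cliqueCount {n : ℕ} (G : SimpleGraph (Fin n)) (s : ℕ) : ℕ :=
  Nat.card {S : Finset (Fin n) // G.IsNClique s S}

/-- `b_k` from Ramsey–Turán theory. -/
noncomputable def bconst (k : ℕ) : ℝ :=
  if Odd k then ((k : ℝ) - 3) / (2 * ((k : ℝ) - 1))
  else (3 * (k : ℝ) - 10) / (2 * (3 * (k : ℝ) - 4))

/-- `a_ℓ` in the even case: maximum over `x ∈ [0,1]`. -/
noncomputable def aEven (ℓ : ℕ) : ℝ :=
  sSup ((fun x : ℝ =>
    ((ℓ - 2).choose 3 : ℝ) * ((1 - x) / ((ℓ : ℝ) - 2)) ^ 3 +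
    x * ((ℓ - 2).choose 2 : ℝ) * ((1 - x) / ((ℓ : ℝ) - 2)) ^ 2 +
    (1 / 2) * (x / 2) ^ 2 * (1 - x)) '' Set.Icc (0 : ℝ) 1)

/-!
Split `Fin n` into halves `A` and `B`, put a triangle-free graph `H` with `α(H) ≤ γ n` on it and
add all `A`–`B` edges. Colouring the `A`–`B` edges arbitrarily with colours `0, 1` and all other
edges with colour `2` gives `2 ^ (⌊n/2⌋ ⌈n/2⌉) ≥ 2 ^ ((1/4 - ε) n²)` colourings without a
monochromatic triangle: a triangle of colour `2` would lie in `H`, and no triangle lies in the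
bipartite graph between `A` and `B`.

A triangle-free `H` on `m` vertices with `α(H) ≤ δ m` comes from Erdős' deletion argument. In the
random graph `G(m, 1/q)` with `q ≈ δ² m / 16`, the expected number of independent sets of size
`k ≈ δ m / 2` is below `1/2` and the expected number of triangles is `O(δ⁻⁶)`, so some graph has
no independent `k`-set and at most `T ≈ δ m / 8` triangles. Isolating the vertices of all its
triangles leaves a triangle-free graph whose independent sets have fewer than `k + 3 T ≤ δ m`
vertices.
-/

abbrev cutGraph {V : Type*} (p : V → Bool) : SimpleGraph V := (⊤ : SimpleGraph Bool).comap p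

section CutColoring

variable {n : ℕ} {H : SimpleGraph (Fin n)}

lemma not_hasMonoClique_three_of_cut (hH : H.CliqueFree 3) {p : Fin n → Bool}
    {φ : (H ⊔ cutGraph p).edgeSet → Fin 3}
    (hφ : ∀ e, φ e = 2 ↔ e.1 ∉ (cutGraph p).edgeSet) :
    ¬ HasMonoClique (H ⊔ cutGraph p) φ 3 := by
  rintro ⟨S, c, hS, hmono⟩
  have hcut : ∀ u ∈ S, ∀ v ∈ S, u ≠ v → (c = 2 ↔ p u = p v) := by
    intro u hu v hv huv
    obtain ⟨hadj, rfl⟩ := hmono u hu v hv huv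
    simp [hφ]
  obtain ⟨x, y, z, hxy, hxz, hyz, rfl⟩ := card_eq_three.mp hS
  by_cases hc : c = 2
  · have hadj : ∀ u ∈ ({x, y, z} : Finset (Fin n)), ∀ v ∈ ({x, y, z} : Finset (Fin n)),
        u ≠ v → H.Adj u v := fun u hu v hv huv =>
      (hmono u hu v hv huv).1.resolve_right (by simpa using (hcut u hu v hv huv).mp hc)
    exact hH _ (SimpleGraph.is3Clique_triple_iff.mpr
      ⟨hadj x (by simp) y (by simp) hxy, hadj x (by simp) z (by simp) hxz,
        hadj y (by simp) z (by simp) hyz⟩)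
  · have hxy := hcut x (by simp) y (by simp) hxy
    have hxz := hcut x (by simp) z (by simp) hxz
    have hyz := hcut y (by simp) z (by simp) hyz
    revert hxy hxz hyz
    cases p x <;> cases p y <;> cases p z <;> simp [hc]

lemma two_pow_mul_le_numColorings (hH : H.CliqueFree 3) (p : Fin n → Bool) :
    2 ^ (#{v | p v} * #{v | ¬ p v}) ≤ numColorings (H ⊔ cutGraph p) 3 3 := by
  classical
  let allowed : (H ⊔ cutGraph p).edgeSet → Finset (Fin 3) :=
    fun e => if e.1 ∈ (cutGraph p).edgeSet then {0, 1} else {2}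
  have hgood : Fintype.piFinset allowed ⊆
      univ.filter (¬ HasMonoClique (H ⊔ cutGraph p) · 3) := by
    intro φ hφ
    rw [Fintype.mem_piFinset] at hφ
    rw [mem_filter]
    refine ⟨mem_univ _, not_hasMonoClique_three_of_cut hH fun e => ?_⟩
    have := hφ e
    by_cases he : e.1 ∈ (cutGraph p).edgeSet <;> simp [allowed, he] at this ⊢ <;> omega
  have hcut : #{v | p v} * #{v | ¬ p v} ≤
      #{e : (H ⊔ cutGraph p).edgeSet | e.1 ∈ (cutGraph p).edgeSet} := by
    rw [← card_product, ← Fintype.card_coe, ← Fintype.card_subtype]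
    have hside : ∀ uv ∈ ({v | p v} : Finset (Fin n)) ×ˢ ({v | ¬ p v} : Finset (Fin n)),
        p uv.1 ≠ p uv.2 := by
      simp +contextual
    refine Fintype.card_le_of_injective
      (fun uv => ⟨⟨s(uv.1.1, uv.1.2), Or.inr (hside uv.1 uv.2)⟩, hside uv.1 uv.2⟩) ?_
    rintro ⟨⟨u, v⟩, huv⟩ ⟨⟨u', v'⟩, huv'⟩ h
    have h : s(u, v) = s(u', v') := congrArg (fun e => e.1.1) h
    rw [Sym2.eq_iff] at h
    simp only [mem_product, mem_filter, mem_univ, true_and] at huv huv'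
    rcases h with ⟨rfl, rfl⟩ | ⟨rfl, rfl⟩
    · rfl
    · simp_all
  calc 2 ^ (#{v | p v} * #{v | ¬ p v})
      ≤ 2 ^ #{e : (H ⊔ cutGraph p).edgeSet | e.1 ∈ (cutGraph p).edgeSet} :=
        Nat.pow_le_pow_right two_pos hcut
    _ = #(Fintype.piFinset allowed) := by
      simp only [Fintype.card_piFinset, allowed, apply_ite card]
      rw [prod_ite, prod_const, prod_const]
      simp
    _ ≤ numColorings (H ⊔ cutGraph p) 3 3 := by
      rw [numColorings, Nat.card_eq_fintype_card, Fintype.card_subtype]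
      exact card_le_card hgood

end CutColoring

namespace SimpleGraph

variable {V : Type*} {G : SimpleGraph V} {k : ℕ}

lemma IndepSetFree.card_lt (hG : G.IndepSetFree k) {S : Finset V} (hS : G.IsIndepSet S) :
    #S < k := by
  by_contra! h
  obtain ⟨t, hts, ht⟩ := exists_subset_card_eq h
  exact hG t ⟨hS.mono (by simpa using hts), ht⟩

lemma exists_cliqueFree_of_card_cliqueFinset_le [Fintype V] [DecidableEq V] [DecidableRel G.Adj]
    {s T : ℕ} (hs : 2 ≤ s) (hk : G.IndepSetFree k) (hT : #(G.cliqueFinset s) ≤ T) :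
    ∃ H : SimpleGraph V, H.CliqueFree s ∧ ∀ S : Finset V, H.IsIndepSet S → #S < k + s * T := by
  set U := (G.cliqueFinset s).biUnion id
  refine ⟨((⊤ : G.Subgraph).induce (↑U)ᶜ).spanningCoe, fun S hS => ?_, fun S hS => ?_⟩
  · have hSU : S ⊆ U := subset_biUnion_of_mem id (mem_cliqueFinset_iff.mpr
      (hS.mono (Subgraph.spanningCoe_le _)))
    obtain ⟨u, hu, v, hv, huv⟩ := one_lt_card.mp (hS.card_eq ▸ hs)
    have := hS.isClique hu hv huv
    simp only [Subgraph.spanningCoe_adj, Subgraph.induce_adj, Set.mem_compl_iff, SetLike.mem_coe,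
      Subgraph.top_adj] at this
    exact this.1 (hSU hu)
  · have hSU : G.IsIndepSet ↑(S \ U) := by
      intro u hu v hv huv hadj
      simp only [coe_sdiff, Set.mem_sdiff, mem_coe] at hu hv
      exact hS hu.1 hv.1 huv (by simp [hadj, hu.2, hv.2])
    have hU : #U ≤ s * T := by
      calc #U ≤ ∑ t ∈ G.cliqueFinset s, #t := card_biUnion_le
        _ = ∑ t ∈ G.cliqueFinset s, s :=
          sum_congr rfl fun t ht => (mem_cliqueFinset_iff.mp ht).card_eq
        _ ≤ s * T := by rw [sum_const, smul_eq_mul, mul_comm]; exact Nat.mul_le_mul_left s hT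
    have := hk.card_lt hSU
    have := card_le_card_sdiff_add_card (s := S) (t := U)
    omega

end SimpleGraph

lemma card_filter_forall_mem_mul_pow {α β : Type*} [Fintype α] [DecidableEq α] [Fintype β]
    [DecidableEq β] (P : Finset α) (t : Finset β) :
    #{f : α → β | ∀ a ∈ P, f a ∈ t} * Fintype.card β ^ #P =
      #t ^ #P * Fintype.card β ^ Fintype.card α := by
  have hpi : ({f : α → β | ∀ a ∈ P, f a ∈ t} : Finset (α → β)) =
      Fintype.piFinset fun a => if a ∈ P then t else univ := by
    ext f
    simp only [mem_filter, mem_univ, true_and, Fintype.mem_piFinset]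
    refine forall_congr' fun a => ?_
    split_ifs <;> simp [*]
  rw [hpi, Fintype.card_piFinset]
  simp only [apply_ite card, card_univ]
  rw [prod_ite, prod_const, prod_const, filter_not]
  simp only [filter_mem_eq_inter, univ_inter, ← compl_eq_univ_sdiff]
  rw [mul_assoc, ← pow_add, card_compl_add_card]

lemma sum_card_filter_powersetCard_mul_pow {V β : Type*} [Fintype V] [DecidableEq V] [Fintype β]
    [DecidableEq β] (r : ℕ) (t : Finset β) :
    ∑ f : Sym2 V → β,
        #{S ∈ univ.powersetCard r | ∀ u ∈ S, ∀ v ∈ S, u ≠ v → f s(u, v) ∈ t} *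
          Fintype.card β ^ r.choose 2 =
      (Fintype.card V).choose r * (#t ^ r.choose 2 * Fintype.card β ^ Fintype.card (Sym2 V)) := by
  have hS : ∀ S ∈ univ.powersetCard r,
      #{f : Sym2 V → β | ∀ u ∈ S, ∀ v ∈ S, u ≠ v → f s(u, v) ∈ t} * Fintype.card β ^ r.choose 2 =
        #t ^ r.choose 2 * Fintype.card β ^ Fintype.card (Sym2 V) := by
    intro S hS
    have hpairs : ∀ f : Sym2 V → β, (∀ e ∈ S.offDiag.image Sym2.mk.uncurry, f e ∈ t) ↔
        ∀ u ∈ S, ∀ v ∈ S, u ≠ v → f s(u, v) ∈ t := fun f => by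
      simp only [forall_mem_image, Prod.forall, mem_offDiag, Function.uncurry_apply_pair, and_imp]
      exact ⟨fun h u hu v hv => h u v hu hv, fun h u v hu hv => h u hu v hv⟩
    rw [← mem_powersetCard_univ.mp hS, ← Sym2.card_image_offDiag,
      ← filter_congr fun f _ => hpairs f, card_filter_forall_mem_mul_pow]
  have hdouble := sum_card_bipartiteAbove_eq_sum_card_bipartiteBelow (s := univ)
    (t := univ.powersetCard r) (r := fun (f : Sym2 V → β) (S : Finset V) =>
      ∀ u ∈ S, ∀ v ∈ S, u ≠ v → f s(u, v) ∈ t)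
  simp only [bipartiteAbove, bipartiteBelow] at hdouble
  rw [← sum_mul, hdouble, sum_mul, sum_congr rfl hS,
    sum_const, card_powersetCard, card_univ, smul_eq_mul]

section RandomGraph

variable {V : Type*} {q : ℕ} [NeZero q]

/-- For uniformly random `f`, this is the random graph `G(n, 1/q)`. -/
def randomGraph (f : Sym2 V → Fin q) : SimpleGraph V := SimpleGraph.fromEdgeSet {e | f e = 0}

lemma randomGraph_adj {f : Sym2 V → Fin q} {u v : V} :
    (randomGraph f).Adj u v ↔ u ≠ v ∧ f s(u, v) = 0 := by
  simp [randomGraph, and_comm]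

open scoped Classical in
lemma sum_card_cliqueFinset_randomGraph_mul_pow [Fintype V] [DecidableEq V] (r : ℕ) :
    ∑ f : Sym2 V → Fin q, #((randomGraph f).cliqueFinset r) * q ^ r.choose 2 =
      (Fintype.card V).choose r * q ^ Fintype.card (Sym2 V) := by
  have hclique : ∀ f : Sym2 V → Fin q, (randomGraph f).cliqueFinset r =
      {S ∈ (univ : Finset V).powersetCard r |
        ∀ u ∈ S, ∀ v ∈ S, u ≠ v → f s(u, v) ∈ ({0} : Finset (Fin q))} := by
    intro f
    ext S
    simp +contextual [randomGraph_adj, SimpleGraph.mem_cliqueFinset_iff, SimpleGraph.isNClique_iff,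
      SimpleGraph.isClique_iff, Set.Pairwise, and_comm]
  simpa [hclique] using sum_card_filter_powersetCard_mul_pow (V := V) r ({0} : Finset (Fin q))

open scoped Classical in
lemma sum_card_indepSetFinset_randomGraph_mul_pow [Fintype V] [DecidableEq V] (r : ℕ) :
    ∑ f : Sym2 V → Fin q, #((randomGraph f).indepSetFinset r) * q ^ r.choose 2 =
      (Fintype.card V).choose r * ((q - 1) ^ r.choose 2 * q ^ Fintype.card (Sym2 V)) := by
  have hindep : ∀ f : Sym2 V → Fin q, (randomGraph f).indepSetFinset r =
      {S ∈ (univ : Finset V).powersetCard r |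
        ∀ u ∈ S, ∀ v ∈ S, u ≠ v → f s(u, v) ∈ ({0}ᶜ : Finset (Fin q))} := by
    intro f
    ext S
    simp [randomGraph_adj, SimpleGraph.mem_indepSetFinset_iff, SimpleGraph.isNIndepSet_iff,
      SimpleGraph.isIndepSet_iff, Set.Pairwise, and_comm]
  simpa [hindep, card_compl] using
    sum_card_filter_powersetCard_mul_pow (V := V) r ({0}ᶜ : Finset (Fin q))

end RandomGraph

open scoped Classical in
lemma exists_indepSetFree_card_cliqueFinset_le {V : Type*} [Fintype V] [DecidableEq V]
    {k q T : ℕ} (hq : 0 < q) (h3 : 2 * (Fintype.card V).choose 3 < (T + 1) * q ^ 3)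
    (hk : 2 * (Fintype.card V).choose k * (q - 1) ^ k.choose 2 ≤ q ^ k.choose 2) :
    ∃ G : SimpleGraph V, G.IndepSetFree k ∧ #(G.cliqueFinset 3) ≤ T := by
  have : NeZero q := NeZero.of_pos hq
  set N := Fintype.card (Sym2 V)
  have hA : 2 * ∑ f : Sym2 V → Fin q, #((randomGraph f).cliqueFinset 3) < (T + 1) * q ^ N := by
    have hsum := sum_card_cliqueFinset_randomGraph_mul_pow (V := V) (q := q) 3
    rw [show Nat.choose 3 2 = 3 from rfl] at hsum
    refine Nat.lt_of_mul_lt_mul_right (a := q ^ 3) ?_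
    calc (2 * ∑ f : Sym2 V → Fin q, #((randomGraph f).cliqueFinset 3)) * q ^ 3
        = 2 * (Fintype.card V).choose 3 * q ^ N := by
          rw [mul_assoc, sum_mul, hsum, mul_assoc]
      _ < (T + 1) * q ^ 3 * q ^ N := Nat.mul_lt_mul_of_pos_right h3 (by positivity)
      _ = (T + 1) * q ^ N * q ^ 3 := by ring
  have hB : 2 * ∑ f : Sym2 V → Fin q, #((randomGraph f).indepSetFinset k) ≤ q ^ N := by
    refine Nat.le_of_mul_le_mul_right (c := q ^ k.choose 2) ?_ (by positivity)
    calc (2 * ∑ f : Sym2 V → Fin q, #((randomGraph f).indepSetFinset k)) * q ^ k.choose 2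
        = 2 * (Fintype.card V).choose k * (q - 1) ^ k.choose 2 * q ^ N := by
          rw [mul_assoc, sum_mul, sum_card_indepSetFinset_randomGraph_mul_pow k]; ring
      _ ≤ q ^ k.choose 2 * q ^ N := Nat.mul_le_mul_right _ hk
      _ = q ^ N * q ^ k.choose 2 := by ring
  -- first moment: on average, `#triangles + (T + 1) * #(independent k-sets)` is below `T + 1`
  have hX : ∑ f : Sym2 V → Fin q,
      (#((randomGraph f).cliqueFinset 3) + (T + 1) * #((randomGraph f).indepSetFinset k)) <
        ∑ _f : Sym2 V → Fin q, (T + 1) := by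
    rw [sum_add_distrib, ← mul_sum, sum_const, card_univ, Fintype.card_fun, Fintype.card_fin,
      smul_eq_mul]
    nlinarith
  obtain ⟨f, -, hf⟩ := exists_lt_of_sum_lt hX
  have hfree : #((randomGraph f).indepSetFinset k) = 0 := by
    by_contra h
    have := Nat.le_mul_of_pos_right (T + 1) (Nat.pos_of_ne_zero h)
    omega
  refine ⟨randomGraph f, fun S hS => ?_, by omega⟩
  rw [card_eq_zero, eq_empty_iff_forall_notMem] at hfree
  exact hfree S (SimpleGraph.mem_indepSetFinset_iff.mpr hS)

lemma two_mul_pred_pow_self_le {q : ℕ} (hq : 0 < q) : 2 * (q - 1) ^ q ≤ q ^ q := by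
  have hq' : (0 : ℝ) < q := by exact_mod_cast hq
  have hexp : (1 - 1 / (q : ℝ)) ^ q ≤ Real.exp (-1) :=
    Real.one_sub_div_pow_le_exp_neg (by exact_mod_cast hq)
  have he : 2 * Real.exp (-1) ≤ 1 := by
    rw [Real.exp_neg, ← div_eq_mul_inv, div_le_one (Real.exp_pos 1)]
    linarith [Real.add_one_lt_exp one_ne_zero]
  have hreal : 2 * ((q : ℝ) - 1) ^ q ≤ (q : ℝ) ^ q := by
    calc 2 * ((q : ℝ) - 1) ^ q = (2 * (1 - 1 / (q : ℝ)) ^ q) * (q : ℝ) ^ q := by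
          rw [mul_assoc, ← mul_pow]; congr 2; field_simp
      _ ≤ (2 * Real.exp (-1)) * (q : ℝ) ^ q := by gcongr
      _ ≤ (q : ℝ) ^ q := by nlinarith [pow_pos hq' q]
  exact_mod_cast (show ((2 * (q - 1) ^ q : ℕ) : ℝ) ≤ (q : ℝ) ^ q by
    rw [Nat.cast_mul, Nat.cast_pow, Nat.cast_sub hq]; push_cast; exact hreal)

lemma two_mul_choose_mul_pred_pow_le {m k q j : ℕ} (hq : 0 < q) (hj : q * (m + 1) ≤ j) :
    2 * m.choose k * (q - 1) ^ j ≤ q ^ j := by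
  obtain ⟨r, rfl⟩ := Nat.exists_eq_add_of_le hj
  calc 2 * m.choose k * (q - 1) ^ (q * (m + 1) + r)
      ≤ 2 * 2 ^ m * ((q - 1) ^ q) ^ (m + 1) * (q - 1) ^ r := by
        rw [pow_add, pow_mul, ← mul_assoc]
        gcongr
        exact Nat.choose_le_two_pow m k
    _ = (2 * (q - 1) ^ q) ^ (m + 1) * (q - 1) ^ r := by ring
    _ ≤ (q ^ q) ^ (m + 1) * q ^ r := by
        gcongr
        · exact two_mul_pred_pow_self_le hq
        · omega
    _ = q ^ (q * (m + 1) + r) := by ring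

lemma mul_succ_le_choose_two_of_lt {δ : ℝ} {m k q : ℕ} (h1 : 64 ≤ δ * m) (h2 : 64 ≤ δ ^ 2 * m)
    (hm : 4 ≤ m) (hk : δ * m / 2 < k + 1) (hq : q < δ ^ 2 * m / 16 + 1) :
    q * (m + 1) ≤ k.choose 2 := by
  suffices (q : ℝ) * (m + 1) ≤ k * (k - 1) / 2 by
    rw [← Nat.cast_choose_two] at this; exact_mod_cast this
  have hδ : 0 < δ := by
    by_contra! h; nlinarith [(Nat.cast_nonneg m : (0 : ℝ) ≤ m)]
  have hm' : (4 : ℝ) ≤ m := by exact_mod_cast hm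
  have hx2 : 64 * (m : ℝ) ≤ (δ * m) ^ 2 := by nlinarith
  have hx1 : 64 * (δ * m) ≤ (δ * m) ^ 2 := by nlinarith
  have hxδ : 4 * δ * (δ * m) ≤ (δ * m) ^ 2 := by nlinarith
  have hkk : (δ * m / 2 - 1) * (δ * m / 2 - 2) ≤ k * (k - 1) := by
    apply mul_le_mul <;> linarith
  have hqm : (q : ℝ) * (m + 1) ≤ (δ ^ 2 * m / 16 + 1) * (m + 1) := by
    apply mul_le_mul_of_nonneg_right hq.le; positivity
  nlinarith

lemma two_mul_choose_three_lt_of_le {δ : ℝ} {m q T : ℕ} (hδ : 0 < δ) (h7 : 2 ^ 15 ≤ δ ^ 7 * m)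
    (hT : δ * m / 8 < T + 1) (hq : δ ^ 2 * m / 16 ≤ q) :
    2 * m.choose 3 < (T + 1) * q ^ 3 := by
  suffices (m : ℝ) ^ 3 < 3 * ((T + 1) * q ^ 3) by
    have hc := Nat.choose_le_pow_div (α := ℝ) 3 m
    norm_num [Nat.factorial] at hc
    exact_mod_cast (show (2 : ℝ) * m.choose 3 < (T + 1) * q ^ 3 by linarith)
  have hm : (0 : ℝ) < m := Nat.cast_pos.mpr (Nat.pos_of_ne_zero (by rintro rfl; norm_num at h7))
  have hq3 : (δ ^ 2 * m / 16) ^ 3 ≤ (q : ℝ) ^ 3 := by gcongr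
  calc (m : ℝ) ^ 3 ≤ 3 * (δ * m / 8 * (δ ^ 2 * m / 16) ^ 3) := by
        have : (m : ℝ) ^ 3 * 2 ^ 15 ≤ m ^ 3 * (δ ^ 7 * m) := by gcongr
        rw [show 3 * (δ * m / 8 * (δ ^ 2 * m / 16) ^ 3) = 3 * (m ^ 3 * (δ ^ 7 * m)) / 2 ^ 15 by
          ring]
        linarith [pow_nonneg (Nat.cast_nonneg m : (0 : ℝ) ≤ m) 3]
    _ < 3 * (((T : ℝ) + 1) * (q : ℝ) ^ 3) := by
        have := mul_lt_mul hT hq3 (by positivity) (by positivity)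
        linarith

lemma exists_deletion_parameters {δ : ℝ} (hδ : 0 < δ) : ∃ m₀ : ℕ, ∀ m ≥ m₀, ∃ k q T : ℕ,
    0 < q ∧ q * (m + 1) ≤ k.choose 2 ∧ 2 * m.choose 3 < (T + 1) * q ^ 3 ∧
      (k : ℝ) + 3 * T ≤ δ * m := by
  refine ⟨⌈2 ^ 15 / δ ^ 7 + 64 / δ ^ 2 + 64 / δ + 64⌉₊, fun m hm => ?_⟩
  have hm' : 2 ^ 15 / δ ^ 7 + 64 / δ ^ 2 + 64 / δ + 64 ≤ (m : ℝ) := Nat.ceil_le.mp hm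
  have hpos : 0 ≤ 2 ^ 15 / δ ^ 7 ∧ 0 ≤ 64 / δ ^ 2 ∧ 0 ≤ 64 / δ :=
    ⟨by positivity, by positivity, by positivity⟩
  have h1 : 64 ≤ δ * m := by rw [← div_le_iff₀' hδ]; linarith
  have h2 : 64 ≤ δ ^ 2 * m := by rw [← div_le_iff₀' (by positivity)]; linarith
  have h7 : 2 ^ 15 ≤ δ ^ 7 * m := by rw [← div_le_iff₀' (by positivity)]; linarith
  have hm4 : 4 ≤ m := by exact_mod_cast (show (4 : ℝ) ≤ m by linarith)
  have hk := Nat.floor_le (show 0 ≤ δ * m / 2 by positivity)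
  have hT := Nat.floor_le (show 0 ≤ δ * m / 8 by positivity)
  refine ⟨⌊δ * m / 2⌋₊, ⌈δ ^ 2 * m / 16⌉₊, ⌊δ * m / 8⌋₊, Nat.ceil_pos.mpr (by positivity),
    mul_succ_le_choose_two_of_lt h1 h2 hm4 (Nat.lt_floor_add_one _)
      (Nat.ceil_lt_add_one (by positivity)),
    two_mul_choose_three_lt_of_le hδ h7 (Nat.lt_floor_add_one _) (Nat.le_ceil _), by linarith⟩

lemma indepLE.mono {n : ℕ} {H G : SimpleGraph (Fin n)} {b : ℝ} (hH : indepLE H b) (hHG : H ≤ G) :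
    indepLE G b :=
  fun S hS => hH S fun u hu v hv huv hadj => hS u hu v hv huv (hHG hadj)

lemma exists_cliqueFree_three_indepLE {δ : ℝ} (hδ : 0 < δ) :
    ∃ m₀ : ℕ, ∀ m ≥ m₀, ∃ H : SimpleGraph (Fin m), H.CliqueFree 3 ∧ indepLE H (δ * m) := by
  classical
  obtain ⟨m₀, hm₀⟩ := exists_deletion_parameters hδ
  refine ⟨m₀, fun m hm => ?_⟩
  obtain ⟨k, q, T, hq, hk, h3, hkT⟩ := hm₀ m hm
  obtain ⟨G, hGk, hGT⟩ := exists_indepSetFree_card_cliqueFinset_le (V := Fin m) hq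
    (by simpa using h3) (by simpa using two_mul_choose_mul_pred_pow_le (k := k) hq hk)
  obtain ⟨H, hH3, hHα⟩ := G.exists_cliqueFree_of_card_cliqueFinset_le (by norm_num) hGk hGT
  refine ⟨H, hH3, fun S hS => ?_⟩
  calc (#S : ℝ) ≤ k + 3 * T := by exact_mod_cast (hHα S fun u hu v hv => hS u hu v hv).le
    _ ≤ δ * m := hkT

lemma two_pow_le_numColorings_halves {n : ℕ} {H : SimpleGraph (Fin n)} (hH : H.CliqueFree 3) :
    2 ^ (n / 2 * (n - n / 2)) ≤
      numColorings (H ⊔ cutGraph fun v : Fin n => v.val < n / 2) 3 3 := by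
  have hA : #{v : Fin n | v.val < n / 2} = n / 2 := by
    simp [Fin.card_filter_val_lt, Nat.div_le_self]
  have hB : #{v : Fin n | n / 2 ≤ v.val} = n - n / 2 := by
    have := card_filter_add_card_filter_not (s := univ) fun v : Fin n => v.val < n / 2
    simp only [not_lt, card_univ, Fintype.card_fin] at this
    omega
  convert two_pow_mul_le_numColorings hH fun v : Fin n => v.val < n / 2 using 3 <;> simp [hA, hB]

lemma sub_mul_sq_le_half_mul_sub_half {ε : ℝ} {n : ℕ} (hεn : 1 ≤ ε * n) :
    (1 / 4 - ε) * (n : ℝ) ^ 2 ≤ ((n / 2 * (n - n / 2) : ℕ) : ℝ) := by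
  have hsq : n ^ 2 ≤ 4 * (n / 2 * (n - n / 2)) + 1 := by
    obtain ⟨a, rfl | rfl⟩ := Nat.even_or_odd' n
    · rw [show 2 * a / 2 = a by omega, show 2 * a - a = a by omega]; ring_nf; omega
    · rw [show (2 * a + 1) / 2 = a by omega, show 2 * a + 1 - a = a + 1 by omega]; ring_nf; omega
  have : (n : ℝ) ^ 2 ≤ 4 * ((n / 2 * (n - n / 2) : ℕ) : ℝ) + 1 := by exact_mod_cast hsq
  nlinarith

theorem statement_13 (ε : ℝ) (hε : 0 < ε) (γ : ℝ) (hγ : 0 < γ) :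
    ∃ n0 : ℕ, ∀ n : ℕ, n0 ≤ n → ∃ G : SimpleGraph (Fin n),
      indepLE G (γ * n) ∧
      (2 : ℝ) ^ ((1 / 4 - ε) * (n : ℝ) ^ 2) ≤ (numColorings G 3 3 : ℝ) := by
  obtain ⟨m₀, hm₀⟩ := exists_cliqueFree_three_indepLE hγ
  refine ⟨max m₀ ⌈1 / ε⌉₊, fun n hn => ?_⟩
  obtain ⟨H, hH3, hHα⟩ := hm₀ n (le_of_max_le_left hn)
  have hεn : 1 ≤ ε * n := by
    have := (Nat.le_ceil (1 / ε)).trans (Nat.cast_le.mpr (le_of_max_le_right hn))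
    rwa [div_le_iff₀ hε, mul_comm] at this
  refine ⟨H ⊔ cutGraph fun v : Fin n => v.val < n / 2, hHα.mono le_sup_left, ?_⟩
  calc (2 : ℝ) ^ ((1 / 4 - ε) * (n : ℝ) ^ 2)
      ≤ (2 : ℝ) ^ ((n / 2 * (n - n / 2) : ℕ) : ℝ) :=
        Real.rpow_le_rpow_of_exponent_le one_le_two (sub_mul_sq_le_half_mul_sub_half hεn)
    _ ≤ _ := by
      rw [Real.rpow_natCast]
      exact_mod_cast two_pow_le_numColorings_halves hH3
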